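/- Assume P(ξ₁ ≤ 0) > 0 and assume there exist a constant c > 0 and a threshold x₀ ≥ 0 such that for every real x ≥ x₀ and every integer n ≥ 0: P(V^#_n ≤ x and max_{0≤k≤n} S_k ≤ x/2) ≥ c·P(V^#_n ≤ x), and likewise P(V^#_n ≤ x and S_n − min_{0≤k≤n} S_k ≤ x/2) ≥ c·P(V^#_n ≤ x). Then there exists a constant C > 0 such that for every real x ≥ x₀ and all integers m ≥ 1, n ≥ 1: P(V^#_{m+n} ≤ x) ≥ C · P(V^#_m ≤ x) · P(V^#_n ≤ x). -/

import Mathlib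

open MeasureTheory ProbabilityTheory Filter

noncomputable section

/-- The random walk `S_n = ξ₁ + ⋯ + ξ_n` associated with the steps `ξ`. -/
def walk {Ω : Type*} (ξ : ℕ → Ω → ℝ) (n : ℕ) (ω : Ω) : ℝ :=
  ∑ i ∈ Finset.range n, ξ i ω

/-- `max_{0 ≤ k ≤ n} S_k`. -/
def walkMax {Ω : Type*} (ξ : ℕ → Ω → ℝ) (n : ℕ) (ω : Ω) : ℝ :=
  (Finset.range (n + 1)).sup' Finset.nonempty_range_add_one fun k => walk ξ k ω

/-- `min_{0 ≤ k ≤ n} S_k`. -/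
def walkMin {Ω : Type*} (ξ : ℕ → Ω → ℝ) (n : ℕ) (ω : Ω) : ℝ :=
  (Finset.range (n + 1)).inf' Finset.nonempty_range_add_one fun k => walk ξ k ω

/-- `V^#_n = max_{0 ≤ u ≤ v ≤ n} (S_v - S_u)`, the supremum of the reflected walk. -/
def reflMax {Ω : Type*} (ξ : ℕ → Ω → ℝ) (n : ℕ) (ω : Ω) : ℝ :=
  (Finset.range (n + 1)).sup' Finset.nonempty_range_add_one fun v =>
    (Finset.range (v + 1)).sup' Finset.nonempty_range_add_one fun u =>
      walk ξ v ω - walk ξ u ω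

/-! On the event that the first `m` steps have `V^#_m ≤ x` and end within `x / 2` of their
minimum, and the next `n` steps have `V^#_n ≤ x` and never rise more than `x / 2` above their
start, the whole walk has `V^#_{m+n} ≤ x`: an increment straddling time `m` is the fall of the
first piece to its end plus the rise of the second above its start. The two events are independent,
the second has the probability of its unshifted counterpart, and the hypotheses bound both from
below by `c` times `P(V^#_m ≤ x)` and `P(V^#_n ≤ x)`; so `C = c²` works. -/

section Deterministic

variable {Ω : Type*} (ξ : ℕ → Ω → ℝ) (ω : Ω)

lemma walk_add (m j : ℕ) :
    walk ξ (m + j) ω = walk ξ m ω + walk (fun i => ξ (m + i)) j ω :=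
  Finset.sum_range_add (fun i => ξ i ω) m j

variable {ξ ω}

lemma walk_le_walkMax {k n : ℕ} (hk : k ≤ n) : walk ξ k ω ≤ walkMax ξ n ω :=
  Finset.le_sup' (fun k => walk ξ k ω) (Finset.mem_range_succ_iff.2 hk)

lemma walkMin_le_walk {k n : ℕ} (hk : k ≤ n) : walkMin ξ n ω ≤ walk ξ k ω :=
  Finset.inf'_le (fun k => walk ξ k ω) (Finset.mem_range_succ_iff.2 hk)

lemma reflMax_le_iff {n : ℕ} {x : ℝ} :
    reflMax ξ n ω ≤ x ↔ ∀ v ≤ n, ∀ u ≤ v, walk ξ v ω - walk ξ u ω ≤ x := by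
  simp only [reflMax, Finset.sup'_le_iff, Finset.mem_range_succ_iff]

lemma reflMax_add_le {m n : ℕ} {x : ℝ} (h₁ : reflMax ξ m ω ≤ x)
    (h₂ : walk ξ m ω - walkMin ξ m ω ≤ x / 2)
    (h₃ : reflMax (fun i => ξ (m + i)) n ω ≤ x)
    (h₄ : walkMax (fun i => ξ (m + i)) n ω ≤ x / 2) :
    reflMax ξ (m + n) ω ≤ x := by
  rw [reflMax_le_iff] at h₁ h₃ ⊢
  intro v hv u huv
  rcases le_or_gt v m with hvm | hmv
  · exact h₁ v hvm u huv
  obtain ⟨j, rfl⟩ := Nat.exists_eq_add_of_le hmv.le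
  have hj : j ≤ n := by omega
  rw [walk_add]
  rcases le_or_gt u m with hum | hmu
  · linarith [walk_le_walkMax (ξ := fun i => ξ (m + i)) (ω := ω) hj,
      walkMin_le_walk (ξ := ξ) (ω := ω) hum]
  · obtain ⟨i, rfl⟩ := Nat.exists_eq_add_of_le hmu.le
    rw [walk_add]
    linarith [h₃ j hj i (by omega)]

end Deterministic

section Measurability

variable {Ω : Type*} {mΩ : MeasurableSpace Ω} {ξ : ℕ → Ω → ℝ} {n : ℕ}

lemma measurable_walk (hξ : ∀ i < n, Measurable (ξ i)) : Measurable (walk ξ n) :=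
  Finset.measurable_sum _ fun i hi => hξ i (Finset.mem_range.1 hi)

lemma measurable_walkMax (hξ : ∀ i < n, Measurable (ξ i)) : Measurable (walkMax ξ n) :=
  Finset.measurable_range_sup'' fun k hk => measurable_walk fun i hi => hξ i (by omega)

lemma measurable_walkMin (hξ : ∀ i < n, Measurable (ξ i)) : Measurable (walkMin ξ n) := by
  have : walkMin ξ n = (Finset.range (n + 1)).inf' Finset.nonempty_range_add_one (walk ξ) := by
    ext ω
    simp only [walkMin, Finset.inf'_apply]
  rw [this]
  exact Finset.inf'_induction _ _ (fun _ hf _ hg => hf.inf hg) fun k hk =>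
    measurable_walk fun i hi => hξ i (by simp only [Finset.mem_range] at hk; omega)

lemma measurable_reflMax (hξ : ∀ i < n, Measurable (ξ i)) : Measurable (reflMax ξ n) :=
  Finset.measurable_range_sup'' fun v hv => Finset.measurable_range_sup'' fun u hu =>
    (measurable_walk fun i hi => hξ i (by omega)).sub
      (measurable_walk fun i hi => hξ i (by omega))

lemma measurableSet_reflMax_le_walkMax_le (hξ : ∀ i < n, Measurable (ξ i)) (x y : ℝ) :
    MeasurableSet {ω | reflMax ξ n ω ≤ x ∧ walkMax ξ n ω ≤ y} :=
  (measurableSet_le (measurable_reflMax hξ) measurable_const).inter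
    (measurableSet_le (measurable_walkMax hξ) measurable_const)

lemma measurableSet_reflMax_le_walk_sub_walkMin_le (hξ : ∀ i < n, Measurable (ξ i))
    (x y : ℝ) :
    MeasurableSet {ω | reflMax ξ n ω ≤ x ∧ walk ξ n ω - walkMin ξ n ω ≤ y} :=
  (measurableSet_le (measurable_reflMax hξ) measurable_const).inter
    (measurableSet_le ((measurable_walk hξ).sub (measurable_walkMin hξ)) measurable_const)

lemma measurable_iSup_comap {ι β : Type*} [MeasurableSpace β] {X : ι → Ω → β} {s : Set ι}
    {i : ι} (hi : i ∈ s) :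
    Measurable[⨆ j ∈ s, MeasurableSpace.comap (X j) inferInstance] (X i) :=
  Measurable.of_comap_le
    (le_iSup₂ (f := fun j (_ : j ∈ s) => MeasurableSpace.comap (X j) inferInstance) i hi)

end Measurability

section IID

variable {Ω : Type*} [MeasurableSpace Ω] {P : Measure Ω} {ξ : ℕ → Ω → ℝ}

lemma indep_iSup_Iio_iSup_Ici (hindep : iIndepFun ξ P) (hmeas : ∀ i, Measurable (ξ i))
    (m : ℕ) :
    Indep (⨆ i ∈ Set.Iio m, MeasurableSpace.comap (ξ i) inferInstance)
      (⨆ i ∈ Set.Ici m, MeasurableSpace.comap (ξ i) inferInstance) P :=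
  indep_iSup_of_disjoint (fun i => (hmeas i).comap_le) hindep (Set.Iio_disjoint_Ici le_rfl)

lemma identDistrib_shift (hindep : iIndepFun ξ P) (hident : ∀ i, IdentDistrib (ξ i) (ξ 0) P P)
    (m : ℕ) : IdentDistrib (fun ω i => ξ (m + i) ω) (fun ω i => ξ i ω) P P :=
  IdentDistrib.pi (fun i => (hident (m + i)).trans (hident i).symm)
    (hindep.precomp (add_right_injective m)) hindep

end IID

theorem reflMax_supermultiplicative_general
    {Ω : Type*} [MeasurableSpace Ω] (P : Measure Ω) [IsProbabilityMeasure P]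
    (ξ : ℕ → Ω → ℝ) (hmeas : ∀ i, Measurable (ξ i))
    (hindep : iIndepFun ξ P)
    (hident : ∀ i, IdentDistrib (ξ i) (ξ 0) P P)
    (c x₀ : ℝ) (hc : 0 < c)
    (hmax : ∀ x : ℝ, x₀ ≤ x → ∀ n : ℕ,
      c * (P {ω | reflMax ξ n ω ≤ x}).toReal
        ≤ (P {ω | reflMax ξ n ω ≤ x ∧ walkMax ξ n ω ≤ x / 2}).toReal)
    (hmin : ∀ x : ℝ, x₀ ≤ x → ∀ n : ℕ,
      c * (P {ω | reflMax ξ n ω ≤ x}).toReal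
        ≤ (P {ω | reflMax ξ n ω ≤ x ∧ walk ξ n ω - walkMin ξ n ω ≤ x / 2}).toReal) :
    ∃ C : ℝ, 0 < C ∧ ∀ x : ℝ, x₀ ≤ x → ∀ m n : ℕ, 1 ≤ m → 1 ≤ n →
      C * (P {ω | reflMax ξ m ω ≤ x}).toReal * (P {ω | reflMax ξ n ω ≤ x}).toReal
        ≤ (P {ω | reflMax ξ (m + n) ω ≤ x}).toReal := by
  refine ⟨c * c, mul_pos hc hc, fun x hx m n _ _ => ?_⟩
  set η : ℕ → Ω → ℝ := fun i => ξ (m + i)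
  set A := {ω | reflMax ξ m ω ≤ x ∧ walk ξ m ω - walkMin ξ m ω ≤ x / 2}
  set B := {ω | reflMax η n ω ≤ x ∧ walkMax η n ω ≤ x / 2}
  have hAB : P (A ∩ B) = P A * P B :=
    (Indep_iff _ _ P).1 (indep_iSup_Iio_iSup_Ici hindep hmeas m) A B
      (measurableSet_reflMax_le_walk_sub_walkMin_le (fun _ hi => measurable_iSup_comap hi) _ _)
      (measurableSet_reflMax_le_walkMax_le
        (fun i _ => measurable_iSup_comap (Nat.le_add_right m i)) _ _)
  have hB : P B = P {ω | reflMax ξ n ω ≤ x ∧ walkMax ξ n ω ≤ x / 2} :=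
    (identDistrib_shift hindep hident m).measure_mem_eq
      (measurableSet_reflMax_le_walkMax_le (fun i _ => measurable_pi_apply i) _ _)
  have hsub : A ∩ B ⊆ {ω | reflMax ξ (m + n) ω ≤ x} :=
    fun ω ⟨⟨h₁, h₂⟩, h₃, h₄⟩ => reflMax_add_le h₁ h₂ h₃ h₄
  calc c * c * (P {ω | reflMax ξ m ω ≤ x}).toReal * (P {ω | reflMax ξ n ω ≤ x}).toReal
      = (c * (P {ω | reflMax ξ m ω ≤ x}).toReal)
          * (c * (P {ω | reflMax ξ n ω ≤ x}).toReal) := by ring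
    _ ≤ (P A).toReal * (P B).toReal := by
        rw [hB]
        exact mul_le_mul (hmin x hx m) (hmax x hx n) (by positivity) ENNReal.toReal_nonneg
    _ = (P (A ∩ B)).toReal := by rw [hAB, ENNReal.toReal_mul]
    _ ≤ (P {ω | reflMax ξ (m + n) ω ≤ x}).toReal :=
        ENNReal.toReal_mono (measure_ne_top _ _) (measure_mono hsub)

/-- Suppose `P(ξ₁ ≤ 0) > 0` and there are `c > 0`, `x₀ ≥ 0` such that for
all `x ≥ x₀` and `n ≥ 0`, `P(V^#_n ≤ x, max_{0≤k≤n} S_k ≤ x/2) ≥ c ⬝ P(V^#_n ≤ x)` and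
`P(V^#_n ≤ x, S_n - min_{0≤k≤n} S_k ≤ x/2) ≥ c ⬝ P(V^#_n ≤ x)`.  Then there is `C > 0` such
that for all `x ≥ x₀` and `m, n ≥ 1`:
`P(V^#_{m+n} ≤ x) ≥ C ⬝ P(V^#_m ≤ x) ⬝ P(V^#_n ≤ x)`. -/
theorem reflMax_supermultiplicative
    {Ω : Type*} [MeasurableSpace Ω] (P : Measure Ω) [IsProbabilityMeasure P]
    (ξ : ℕ → Ω → ℝ) (hmeas : ∀ i, Measurable (ξ i))
    (hindep : iIndepFun ξ P)
    (hident : ∀ i, IdentDistrib (ξ i) (ξ 0) P P)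
    (hstep : 0 < (P {ω | ξ 0 ω ≤ 0}).toReal)
    (c x₀ : ℝ) (hc : 0 < c) (hx₀ : 0 ≤ x₀)
    (hmax : ∀ x : ℝ, x₀ ≤ x → ∀ n : ℕ,
      c * (P {ω | reflMax ξ n ω ≤ x}).toReal
        ≤ (P {ω | reflMax ξ n ω ≤ x ∧ walkMax ξ n ω ≤ x / 2}).toReal)
    (hmin : ∀ x : ℝ, x₀ ≤ x → ∀ n : ℕ,
      c * (P {ω | reflMax ξ n ω ≤ x}).toReal
        ≤ (P {ω | reflMax ξ n ω ≤ x ∧ walk ξ n ω - walkMin ξ n ω ≤ x / 2}).toReal) :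
    ∃ C : ℝ, 0 < C ∧ ∀ x : ℝ, x₀ ≤ x → ∀ m n : ℕ, 1 ≤ m → 1 ≤ n →
      C * (P {ω | reflMax ξ m ω ≤ x}).toReal * (P {ω | reflMax ξ n ω ≤ x}).toReal
        ≤ (P {ω | reflMax ξ (m + n) ω ≤ x}).toReal :=
  reflMax_supermultiplicative_general P ξ hmeas hindep hident c x₀ hc hmax hmin
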